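/- arXiv:2003.09672 — 2 statements merged into one kernel-verified Lean document; each statement's English description precedes it below -/
import Mathlib

section
/- Let G be a finite group and ψ a 𝕋-valued 2-cocycle on G. Then: (i) for every g ∈ G the map β^ψ_g : C_G(g) → 𝕋, h ↦ ψ(g,h)·conj(ψ(h,g)), is a group homomorphism from the centralizer C_G(g) to 𝕋; (ii) if ψ' is a 2-cocycle cohomologous to ψ, then β^{ψ'}_g = β^ψ_g for every g ∈ G; (iii) for any two 2-cocycles ψ, ψ' on G one has β^{ψ·ψ'}_g = β^ψ_g · β^{ψ'}_g for every g ∈ G. In particular, ψ ↦ (β^ψ_g)_{g∈G} induces a well-defined group homomorphism from the second cohomology group H²(G;𝕋) to the product over g ∈ G of the character groups Hom(C_G(g),𝕋). -/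
/-!
`β` is multiplicative in the cocycle, so (ii) reduces to `β^c_g(h) = 1` for a coboundary
`c = δf` and commuting `g, h`, where `β^c_g(h) = |f g|² |f h|² |f (gh)|²`. Multiplicativity in
`h` comes from three instances of the cocycle identity, combined after writing `β^ψ_g(h)` as
`ψ(g,h) / ψ(h,g)`.
-/

open ComplexConjugate

/-- `ψ` is a `𝕋`-valued 2-cocycle on the group `G`. -/
def IsCocycle {G : Type*} [Group G] (ψ : G → G → ℂ) : Prop :=
  (∀ g h, ‖ψ g h‖ = 1) ∧
    ∀ g h k, ψ g h * ψ (g * h) k = ψ h k * ψ g (h * k)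

/-- `ψ` is a coboundary. -/
def IsCoboundary {G : Type*} [Group G] (ψ : G → G → ℂ) : Prop :=
  ∃ f : G → ℂ, (∀ g, ‖f g‖ = 1) ∧
    ∀ g h, ψ g h = f g * f h * conj (f (g * h))

/-- Two 2-cocycles are cohomologous if their pointwise quotient is a coboundary. -/
def Cohomologous {G : Type*} [Group G] (ψ ψ' : G → G → ℂ) : Prop :=
  IsCoboundary fun g h => ψ g h / ψ' g h

/-- `β^ψ_g(h) = ψ(g,h) · conj (ψ(h,g))`. -/
noncomputable def beta {G : Type*} [Group G] (ψ : G → G → ℂ) (g h : G) : ℂ :=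
  ψ g h * conj (ψ h g)

section

variable {G : Type*} [Group G]

theorem cocycle_mul_eq_of_commute {K : Type*} [Field K] {ψ : G → G → K}
    (hco : ∀ a b c, ψ a b * ψ (a * b) c = ψ b c * ψ a (b * c)) (hne : ∀ a b, ψ a b ≠ 0)
    {g h k : G} (hh : Commute g h) (hk : Commute g k) :
    ψ g (h * k) * (ψ h g * ψ k g) = ψ g h * ψ g k * ψ (h * k) g := by
  have hghk := hco g h k
  have hhkg := hco h k g
  have hhgk := hco h g k
  rw [← hh.eq, hk.eq] at hhgk
  -- `(g,h,k)` and `(h,k,g)` express `ψ g (h * k)` and `ψ (h * k) g` through `ψ (g * h) k` and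
  -- `ψ h (k * g)`, which `(h,g,k)` relates once `g` commutes with `h` and `k`
  refine mul_right_cancel₀ (hne h k) ?_
  linear_combination (-(ψ h g * ψ k g)) * hghk + (-(ψ g h * ψ g k)) * hhkg +
    (ψ g h * ψ k g) * hhgk

theorem beta_mul (ψ ψ' : G → G → ℂ) (g h : G) :
    beta (fun a b => ψ a b * ψ' a b) g h = beta ψ g h * beta ψ' g h := by
  simp only [beta, map_mul]
  ring

theorem norm_beta {ψ : G → G → ℂ} (hψ : ∀ a b, ‖ψ a b‖ = 1) (g h : G) :
    ‖beta ψ g h‖ = 1 := by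
  simp [beta, hψ]

theorem beta_eq_div {ψ : G → G → ℂ} (hψ : ∀ a b, ‖ψ a b‖ = 1) (g h : G) :
    beta ψ g h = ψ g h / ψ h g := by
  rw [beta, ← Complex.inv_eq_conj (hψ h g), div_eq_mul_inv]

theorem IsCocycle.beta_mul_right {ψ : G → G → ℂ} (hψ : IsCocycle ψ) {g h k : G}
    (hh : Commute g h) (hk : Commute g k) :
    beta ψ g (h * k) = beta ψ g h * beta ψ g k := by
  obtain ⟨hnorm, hco⟩ := hψ
  have hne : ∀ a b, ψ a b ≠ 0 := fun a b => norm_ne_zero_iff.1 (by simp [hnorm])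
  simp only [beta_eq_div hnorm]
  rw [div_mul_div_comm, div_eq_div_iff (hne _ _) (mul_ne_zero (hne _ _) (hne _ _))]
  exact cocycle_mul_eq_of_commute hco hne hh hk

theorem IsCoboundary.norm_eq_one {c : G → G → ℂ} (hc : IsCoboundary c) (a b : G) :
    ‖c a b‖ = 1 := by
  obtain ⟨f, hf, hc⟩ := hc
  simp [hc, hf]

theorem IsCoboundary.beta_eq_one {c : G → G → ℂ} (hc : IsCoboundary c) {g h : G}
    (hgh : Commute g h) : beta c g h = 1 := by
  obtain ⟨f, hf, hc⟩ := hc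
  have hf' : ∀ a, f a * conj (f a) = 1 := fun a => by simp [Complex.mul_conj', hf]
  rw [beta, hc, hc, hgh.eq]
  simp only [map_mul, Complex.conj_conj]
  linear_combination (f g * conj (f g)) * (f h * conj (f h)) * hf' (h * g) +
    (f g * conj (f g)) * hf' h + hf' g

theorem Cohomologous.beta_eq {ψ ψ' : G → G → ℂ} (hψψ' : Cohomologous ψ ψ') {g h : G}
    (hgh : Commute g h) : beta ψ' g h = beta ψ g h := by
  -- `ψ a b / 0 = 0` could not have norm one
  have hne : ∀ a b, ψ' a b ≠ 0 := fun a b hzero => by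
    simpa [hzero] using hψψ'.norm_eq_one a b
  have hψ : ψ = fun a b => ψ' a b * (ψ a b / ψ' a b) := by
    ext a b
    rw [mul_div_cancel₀ _ (hne a b)]
  rw [hψ, beta_mul, hψψ'.beta_eq_one hgh, mul_one]

end

theorem stmt0_general {G : Type*} [Group G] (ψ : G → G → ℂ) (hψ : IsCocycle ψ) :
    (∀ g : G,
      (∀ h ∈ Subgroup.centralizer {g}, ‖beta ψ g h‖ = 1) ∧
      (∀ h ∈ Subgroup.centralizer {g}, ∀ k ∈ Subgroup.centralizer {g},
        beta ψ g (h * k) = beta ψ g h * beta ψ g k)) ∧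
    (∀ ψ' : G → G → ℂ, IsCocycle ψ' → Cohomologous ψ ψ' →
      ∀ g : G, ∀ h ∈ Subgroup.centralizer {g}, beta ψ' g h = beta ψ g h) ∧
    (∀ ψ' : G → G → ℂ, IsCocycle ψ' →
      ∀ g h : G, beta (fun a b => ψ a b * ψ' a b) g h = beta ψ g h * beta ψ' g h) := by
  have commute_of_mem {g h : G} (hh : h ∈ Subgroup.centralizer {g}) : Commute g h :=
    (Subgroup.mem_centralizer_singleton_iff.1 hh).symm
  refine ⟨fun g => ⟨fun h _ => norm_beta hψ.1 g h, ?_⟩, ?_, ?_⟩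
  · exact fun h hh k hk => hψ.beta_mul_right (commute_of_mem hh) (commute_of_mem hk)
  · exact fun ψ' _ hψψ' g h hh => hψψ'.beta_eq (commute_of_mem hh)
  · exact fun ψ' _ => beta_mul ψ ψ'

/-- (i) `β^ψ_g` is a group homomorphism from the centralizer `C_G(g)` to `𝕋`;
(ii) cohomologous cocycles give the same `β`; (iii) `β^{ψ·ψ'} = β^ψ · β^{ψ'}`.
Hence `ψ ↦ β^ψ` induces a group homomorphism
`H²(G;𝕋) → ∏_g Hom(C_G(g),𝕋)`. -/
theorem stmt0 {G : Type*} [Group G] [Fintype G] (ψ : G → G → ℂ) (hψ : IsCocycle ψ) :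
    (∀ g : G,
      (∀ h ∈ Subgroup.centralizer {g}, ‖beta ψ g h‖ = 1) ∧
      (∀ h ∈ Subgroup.centralizer {g}, ∀ k ∈ Subgroup.centralizer {g},
        beta ψ g (h * k) = beta ψ g h * beta ψ g k)) ∧
    (∀ ψ' : G → G → ℂ, IsCocycle ψ' → Cohomologous ψ ψ' →
      ∀ g : G, ∀ h ∈ Subgroup.centralizer {g}, beta ψ' g h = beta ψ g h) ∧
    (∀ ψ' : G → G → ℂ, IsCocycle ψ' →
      ∀ g h : G, beta (fun a b => ψ a b * ψ' a b) g h = beta ψ g h * beta ψ' g h) :=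
  stmt0_general ψ hψ
end

section
/- Let J be a finite abelian group, let ⟨·,·⟩ : J × J → 𝕋 be a symmetric pairing on J, and let q : J → 𝕋 satisfy q(-j) = q(j) and ⟨j,j'⟩ = q(j)·q(j')·conj(q(j+j')) for all j,j' ∈ J. Call j ∈ J quaternionic if q(j)^N = -1, where N is the order of j in J. Then: (i) J contains no quaternionic element if and only if there exists a pairing ε on J satisfying ⟨j,j'⟩·ε(j,j')·ε(j',j) = 1 and ε(j,j) = q(j) for all j,j' ∈ J; (ii) if ε⁰ is one pairing satisfying these two conditions, then a pairing ε satisfies them if and only if the pairing (j,j') ↦ ε(j,j')·conj(ε⁰(j,j')) is an alternating pairing on J. -/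
/-!
A pairing `ε` with `ε(j,j) = q(j)` automatically satisfies `⟨j,j'⟩ ε(j,j') ε(j',j) = 1`:
expanding `ε(j+j', j+j')` shows that `ε(j,j') ε(j',j)` is the polarization
`β(j,j') = q(j+j') / (q(j) q(j')) = conj ⟨j,j'⟩` of `q`. So (ii) just says that two pairings
have the same diagonal iff their quotient is alternating, and (i) asks when `q` is the diagonal
of a pairing. Since `β(j,j) = q(j)^2`, we get `(q(j)^N)^2 = β(N j, j) = 1`, so "no quaternionic
element" means `q(j)^N = 1` for all `j`, and this is clearly necessary: `ε(j,j)^N = ε(N j, j) = 1`.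
Conversely the condition passes to subgroups, so by the structure theorem it suffices to treat
cyclic groups and products. On `ZMod n` take `ε(a,b) = q(1)^(ab)`, well defined because
`q(1)^n = 1`, with diagonal `q(1)^(a^2) = q(a)`; on `A × B` glue pairings `ε_A`, `ε_B` of the
factors into `ε((a,b),(a',b')) = ε_A(a,a') ε_B(b,b') β((a,0),(0,b'))`.
-/

open ComplexConjugate

/-- A `𝕋`-valued pairing on `J`: multiplicative in each argument. -/
def IsPairing {J : Type*} [AddCommGroup J] (γ : J → J → ℂ) : Prop :=
  (∀ g h, ‖γ g h‖ = 1) ∧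
    (∀ g g' h, γ (g + g') h = γ g h * γ g' h) ∧
    (∀ g h h', γ g (h + h') = γ g h * γ g h')

/-- An alternating pairing: a pairing with `γ(g,g) = 1` for all `g`. -/
def IsAlternatingPairing {J : Type*} [AddCommGroup J] (γ : J → J → ℂ) : Prop :=
  IsPairing γ ∧ ∀ g, γ g g = 1

open scoped DirectSum

section

variable {J A B : Type*} [AddCommGroup J] [AddCommGroup A] [AddCommGroup B]

namespace IsPairing

variable {γ δ : J → J → ℂ}

lemma ne_zero (hγ : IsPairing γ) (x y : J) : γ x y ≠ 0 :=
  ne_zero_of_norm_ne_zero (by rw [hγ.1]; exact one_ne_zero)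

lemma map_zero_left (hγ : IsPairing γ) (y : J) : γ 0 y = 1 := by
  have h := hγ.2.1 0 0 y
  rw [add_zero] at h
  exact (mul_eq_left₀ (hγ.ne_zero 0 y)).1 h.symm

lemma map_nsmul_left (hγ : IsPairing γ) (m : ℕ) (x y : J) : γ (m • x) y = γ x y ^ m := by
  induction m with
  | zero => rw [zero_smul, pow_zero, hγ.map_zero_left]
  | succ k ih => rw [succ_nsmul, hγ.2.1, ih, pow_succ]

lemma pow_addOrderOf_left (hγ : IsPairing γ) (x y : J) : γ x y ^ addOrderOf x = 1 := by
  rw [← hγ.map_nsmul_left, addOrderOf_nsmul_eq_zero, hγ.map_zero_left]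

lemma map_neg_left_mul (hγ : IsPairing γ) (x y : J) : γ (-x) y * γ x y = 1 := by
  rw [← hγ.2.1, neg_add_cancel, hγ.map_zero_left]

lemma comp (hγ : IsPairing γ) (f g : A →+ J) : IsPairing fun a b => γ (f a) (g b) :=
  ⟨fun _ _ => hγ.1 _ _, fun _ _ _ => by simp only [map_add, hγ.2.1],
    fun _ _ _ => by simp only [map_add, hγ.2.2]⟩

lemma mul (hγ : IsPairing γ) (hδ : IsPairing δ) : IsPairing fun x y => γ x y * δ x y :=
  ⟨fun _ _ => by rw [norm_mul, hγ.1, hδ.1, one_mul],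
    fun _ _ _ => by simp only [hγ.2.1, hδ.2.1]; ring,
    fun _ _ _ => by simp only [hγ.2.2, hδ.2.2]; ring⟩

lemma comp_conj (hγ : IsPairing γ) : IsPairing fun x y => conj (γ x y) :=
  ⟨fun _ _ => by rw [Complex.norm_conj, hγ.1],
    fun _ _ _ => by simp only [hγ.2.1, map_mul], fun _ _ _ => by simp only [hγ.2.2, map_mul]⟩

end IsPairing

lemma isAlternatingPairing_mul_conj_iff {ε ε₀ : J → J → ℂ} (hε : IsPairing ε)
    (hε₀ : IsPairing ε₀) :
    IsAlternatingPairing (fun j j' => ε j j' * conj (ε₀ j j')) ↔ ∀ j, ε j j = ε₀ j j := by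
  rw [IsAlternatingPairing, and_iff_right (hε.mul hε₀.comp_conj)]
  refine forall_congr' fun j => ?_
  rw [← Complex.inv_eq_conj (hε₀.1 j j), mul_inv_eq_one₀ (hε₀.ne_zero j j)]

structure IsQuadraticRefinement (q : J → ℂ) (β : J → J → ℂ) : Prop where
  norm_eq_one : ∀ j, ‖q j‖ = 1
  map_neg : ∀ j, q (-j) = q j
  isPairing : IsPairing β
  map_add : ∀ x y, q (x + y) = q x * q y * β x y

namespace IsQuadraticRefinement

variable {q : J → ℂ} {β : J → J → ℂ}

lemma ne_zero (hq : IsQuadraticRefinement q β) (j : J) : q j ≠ 0 :=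
  ne_zero_of_norm_ne_zero (by rw [hq.norm_eq_one]; exact one_ne_zero)

lemma map_zero (hq : IsQuadraticRefinement q β) : q (0 : J) = 1 := by
  have h := hq.map_add 0 0
  rw [add_zero, hq.isPairing.map_zero_left, mul_one] at h
  exact (mul_eq_right₀ (hq.ne_zero 0)).1 h.symm

lemma polar_self (hq : IsQuadraticRefinement q β) (x : J) : β x x = q x ^ 2 := by
  have h := hq.map_add (-x) x
  rw [neg_add_cancel, hq.map_zero, hq.map_neg] at h
  calc β x x = q x * q x * β (-x) x * β x x := by rw [← h, one_mul]
    _ = q x ^ 2 := by rw [mul_assoc, hq.isPairing.map_neg_left_mul, mul_one, sq]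

lemma map_nsmul (hq : IsQuadraticRefinement q β) (m : ℕ) (x : J) :
    q (m • x) = q x ^ (m * m) := by
  induction m with
  | zero => simp [hq.map_zero]
  | succ k ih =>
    rw [succ_nsmul, hq.map_add, ih, hq.isPairing.map_nsmul_left, hq.polar_self, ← pow_mul,
      ← pow_succ, ← pow_add]
    ring_nf

lemma sq_pow_addOrderOf (hq : IsQuadraticRefinement q β) (x : J) :
    (q x ^ addOrderOf x) ^ 2 = 1 := by
  rw [← pow_mul, mul_comm, pow_mul, ← hq.polar_self, hq.isPairing.pow_addOrderOf_left]

lemma comp (hq : IsQuadraticRefinement q β) (f : A →+ J) :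
    IsQuadraticRefinement (fun a => q (f a)) (fun a b => β (f a) (f b)) :=
  ⟨fun _ => hq.norm_eq_one _, fun _ => by rw [_root_.map_neg, hq.map_neg],
    hq.isPairing.comp f f, fun _ _ => by rw [_root_.map_add, hq.map_add]⟩

lemma of_eq_mul_conj {γ : J → J → ℂ} (hγ : IsPairing γ)
    (hqabs : ∀ j, ‖q j‖ = 1) (hqneg : ∀ j, q (-j) = q j)
    (hqγ : ∀ j j', γ j j' = q j * q j' * conj (q (j + j'))) :
    IsQuadraticRefinement q fun j j' => conj (γ j j') := by
  refine ⟨hqabs, hqneg, hγ.comp_conj, fun x y => ?_⟩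
  have hne : ∀ j, q j ≠ 0 := fun j => ne_zero_of_norm_ne_zero (by rw [hqabs]; exact one_ne_zero)
  rw [hqγ, map_mul, map_mul, Complex.conj_conj, ← Complex.inv_eq_conj (hqabs x),
    ← Complex.inv_eq_conj (hqabs y)]
  field_simp [hne x, hne y]

lemma mul_swap_eq_of_diag {ε : J → J → ℂ} (hq : IsQuadraticRefinement q β)
    (hε : IsPairing ε) (hdiag : ∀ j, ε j j = q j) (x y : J) :
    ε x y * ε y x = β x y := by
  have h : q (x + y) = q x * q y * (ε x y * ε y x) := by
    rw [← hdiag, hε.2.1, hε.2.2, hε.2.2, hdiag, hdiag]; ring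
  rw [hq.map_add] at h
  exact (mul_left_cancel₀ (mul_ne_zero (hq.ne_zero x) (hq.ne_zero y)) h).symm

end IsQuadraticRefinement

lemma ZMod.pow_val_add {M : Type*} [Monoid M] {n : ℕ} [NeZero n] {c : M} (hc : c ^ n = 1)
    (a b : ZMod n) : c ^ (a + b).val = c ^ a.val * c ^ b.val := by
  rw [ZMod.val_add, ← pow_eq_pow_mod _ hc, pow_add]

lemma exists_pairing_diag_zmod {n : ℕ} [NeZero n] {q : ZMod n → ℂ} {β : ZMod n → ZMod n → ℂ}
    (hq : IsQuadraticRefinement q β) (h1 : q 1 ^ n = 1) :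
    ∃ ε : ZMod n → ZMod n → ℂ, IsPairing ε ∧ ∀ a, ε a a = q a := by
  refine ⟨fun a b => q 1 ^ (a * b).val, ⟨fun _ _ => ?_, fun _ _ _ => ?_, fun _ _ _ => ?_⟩,
    fun a => ?_⟩
  · rw [norm_pow, hq.norm_eq_one, one_pow]
  · dsimp only
    rw [add_mul, ZMod.pow_val_add h1]
  · dsimp only
    rw [mul_add, ZMod.pow_val_add h1]
  · dsimp only
    conv_rhs => rw [← ZMod.natCast_zmod_val a, ← nsmul_one, hq.map_nsmul]
    rw [ZMod.val_mul, ← pow_eq_pow_mod _ h1]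

lemma exists_pairing_diag_prod {q : A × B → ℂ} {β : A × B → A × B → ℂ} (hβ : IsPairing β)
    (hqβ : ∀ x y, q (x + y) = q x * q y * β x y) {εA : A → A → ℂ} {εB : B → B → ℂ}
    (hεA : IsPairing εA) (hεB : IsPairing εB) (hA : ∀ a, εA a a = q (a, 0))
    (hB : ∀ b, εB b b = q (0, b)) :
    ∃ ε : A × B → A × B → ℂ, IsPairing ε ∧ ∀ x, ε x x = q x := by
  refine ⟨fun x y => εA x.1 y.1 * εB x.2 y.2 * β (x.1, 0) (0, y.2),
    ((hεA.comp (.fst A B) (.fst A B)).mul (hεB.comp (.snd A B) (.snd A B))).mul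
      (hβ.comp ((AddMonoidHom.inl A B).comp (.fst A B)) ((AddMonoidHom.inr A B).comp (.snd A B))),
    fun x => ?_⟩
  dsimp only
  rw [hA, hB, ← hqβ, Prod.mk_add_mk, add_zero, zero_add]

def QuadraticRefinementsSplit (J : Type*) [AddCommGroup J] : Prop :=
  ∀ (q : J → ℂ) (β : J → J → ℂ), IsQuadraticRefinement q β → (∀ j, q j ^ addOrderOf j = 1) →
    ∃ ε : J → J → ℂ, IsPairing ε ∧ ∀ j, ε j j = q j

namespace QuadraticRefinementsSplit

lemma of_addEquiv (e : A ≃+ B) (h : QuadraticRefinementsSplit B) :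
    QuadraticRefinementsSplit A := by
  intro q β hq hord
  obtain ⟨ε, hε, hdiag⟩ := h _ _ (hq.comp e.symm.toAddMonoidHom) fun b => by
    rw [← AddEquiv.addOrderOf_eq e.symm]; exact hord _
  exact ⟨fun x y => ε (e x) (e y), hε.comp e.toAddMonoidHom e.toAddMonoidHom,
    fun a => by simpa using hdiag (e a)⟩

lemma of_subsingleton [Subsingleton J] : QuadraticRefinementsSplit J :=
  fun _ _ hq _ => ⟨fun _ _ => 1, ⟨by simp, by simp, by simp⟩,
    fun j => by rw [Subsingleton.elim j 0, hq.map_zero]⟩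

lemma zmod (n : ℕ) [NeZero n] : QuadraticRefinementsSplit (ZMod n) :=
  fun _ _ hq hord => exists_pairing_diag_zmod hq (by simpa only [ZMod.addOrderOf_one] using hord 1)

lemma prod (hA : QuadraticRefinementsSplit A) (hB : QuadraticRefinementsSplit B) :
    QuadraticRefinementsSplit (A × B) := by
  intro q β hq hord
  obtain ⟨εA, hεA, hdiagA⟩ := hA _ _ (hq.comp (.inl A B)) fun a => by
    rw [← addOrderOf_injective (.inl A B) (Prod.mk_left_injective 0)]; exact hord _
  obtain ⟨εB, hεB, hdiagB⟩ := hB _ _ (hq.comp (.inr A B)) fun b => by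
    rw [← addOrderOf_injective (.inr A B) (Prod.mk_right_injective 0)]; exact hord _
  exact exists_pairing_diag_prod hq.isPairing hq.map_add hεA hεB hdiagA hdiagB

lemma directSum_zmod {ι : Type*} [Fintype ι] (n : ι → ℕ) [∀ i, NeZero (n i)] :
    QuadraticRefinementsSplit (⨁ i, ZMod (n i)) := by
  revert n
  refine Fintype.induction_empty_option
    (P := fun ι _ => ∀ (n : ι → ℕ) [∀ i, NeZero (n i)],
      QuadraticRefinementsSplit (⨁ i, ZMod (n i))) ?_ ?_ ?_ ι
  · intro α κ _ e h n _
    exact of_addEquiv (DirectSum.equivCongrLeft e.symm) (h _)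
  · intro n _
    have : Subsingleton (⨁ i : PEmpty, ZMod (n i)) := ⟨fun _ _ => DFinsupp.ext fun i => i.elim⟩
    exact of_subsingleton
  · intro α _ h n _
    exact of_addEquiv DirectSum.addEquivProdDirectSum (prod (zmod _) (h _))

lemma of_finite [Finite J] : QuadraticRefinementsSplit J := by
  obtain ⟨ι, _, n, hn, ⟨e⟩⟩ := AddCommGroup.equiv_directSum_zmod_of_finite' J
  have : ∀ i, NeZero (n i) := fun i => NeZero.of_pos (zero_lt_one.trans (hn i))
  exact of_addEquiv e (directSum_zmod n)

end QuadraticRefinementsSplit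

end

theorem stmt6_general {J : Type*} [AddCommGroup J] [Fintype J]
    (γ : J → J → ℂ) (q : J → ℂ)
    (hγ : IsPairing γ)
    (hqabs : ∀ j, ‖q j‖ = 1)
    (hqneg : ∀ j, q (-j) = q j)
    (hqγ : ∀ j j', γ j j' = q j * q j' * conj (q (j + j'))) :
    ((¬ ∃ j : J, q j ^ addOrderOf j = -1) ↔
      ∃ ε : J → J → ℂ, IsPairing ε ∧
        (∀ j j', γ j j' * ε j j' * ε j' j = 1) ∧ (∀ j, ε j j = q j)) ∧
    (∀ ε0 : J → J → ℂ, IsPairing ε0 →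
      (∀ j j', γ j j' * ε0 j j' * ε0 j' j = 1) → (∀ j, ε0 j j = q j) →
      ∀ ε : J → J → ℂ, IsPairing ε →
        (((∀ j j', γ j j' * ε j j' * ε j' j = 1) ∧ (∀ j, ε j j = q j)) ↔
          IsAlternatingPairing (fun j j' => ε j j' * conj (ε0 j j')))) := by
  have hq := IsQuadraticRefinement.of_eq_mul_conj hγ hqabs hqneg hqγ
  have hsolves : ∀ ε, IsPairing ε → (∀ j, ε j j = q j) → ∀ j j', γ j j' * ε j j' * ε j' j = 1 :=
    fun ε hε hdiag j j' => by
      rw [mul_assoc, hq.mul_swap_eq_of_diag hε hdiag, ← Complex.inv_eq_conj (hγ.1 j j'),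
        mul_inv_cancel₀ (hγ.ne_zero j j')]
  refine ⟨⟨fun hnq => ?_, ?_⟩, fun ε₀ hε₀ _ hdiag₀ ε hε => ?_⟩
  · have hord : ∀ j, q j ^ addOrderOf j = 1 := fun j =>
      (sq_eq_one_iff.1 (hq.sq_pow_addOrderOf j)).resolve_right fun h => hnq ⟨j, h⟩
    obtain ⟨ε, hε, hdiag⟩ := QuadraticRefinementsSplit.of_finite q _ hq hord
    exact ⟨ε, hε, hsolves ε hε hdiag, hdiag⟩
  · rintro ⟨ε, hε, -, hdiag⟩ ⟨j, hj⟩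
    rw [← hdiag, hε.pow_addOrderOf_left] at hj
    norm_num at hj
  · rw [isAlternatingPairing_mul_conj_iff hε hε₀]
    simp only [hdiag₀]
    exact ⟨And.right, fun h => ⟨hsolves ε hε h, h⟩⟩

/-- Lemma 3 (abstract form).  Let `⟨·,·⟩` be a symmetric pairing on the finite
abelian group `J` and let `q : J → 𝕋` satisfy `q(-j) = q(j)` and
`⟨j,j'⟩ = q(j)q(j')conj(q(j+j'))`.  Call `j` quaternionic if `q(j)^N = -1`
with `N = ord(j)`.  Then: (i) `J` has no quaternionic element iff there is a
pairing `ε` with `⟨j,j'⟩ ε(j,j') ε(j',j) = 1` and `ε(j,j) = q(j)`;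
(ii) given one solution `ε⁰`, a pairing `ε` is a solution iff `ε · conj ε⁰`
is an alternating pairing. -/
theorem stmt6 {J : Type*} [AddCommGroup J] [Fintype J]
    (γ : J → J → ℂ) (q : J → ℂ)
    (hγ : IsPairing γ) (hsym : ∀ j j', γ j j' = γ j' j)
    (hqabs : ∀ j, ‖q j‖ = 1)
    (hqneg : ∀ j, q (-j) = q j)
    (hqγ : ∀ j j', γ j j' = q j * q j' * conj (q (j + j'))) :
    ((¬ ∃ j : J, q j ^ addOrderOf j = -1) ↔
      ∃ ε : J → J → ℂ, IsPairing ε ∧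
        (∀ j j', γ j j' * ε j j' * ε j' j = 1) ∧ (∀ j, ε j j = q j)) ∧
    (∀ ε0 : J → J → ℂ, IsPairing ε0 →
      (∀ j j', γ j j' * ε0 j j' * ε0 j' j = 1) → (∀ j, ε0 j j = q j) →
      ∀ ε : J → J → ℂ, IsPairing ε →
        (((∀ j j', γ j j' * ε j j' * ε j' j = 1) ∧ (∀ j, ε j j = q j)) ↔
          IsAlternatingPairing (fun j j' => ε j j' * conj (ε0 j j')))) :=
  stmt6_general γ q hγ hqabs hqneg hqγ
end
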